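/- arXiv:2502.06340 — 5 statements merged into one kernel-verified Lean document; each statement's English description precedes it below -/
import Mathlib

section
/- ∫₀^1 log(tan(π(x+1)/4)) dx = 4G/π, where G is Catalan's constant. -/
open Real Set MeasureTheory intervalIntegral

/-!
The substitution `θ = π (x + 1) / 4` turns the integral into `(4 / π) ∫_{π/4}^{π/2} log (tan θ) dθ`,
and the reflection `θ ↦ π / 2 - θ`, which inverts `tan`, into `-(4 / π) ∫_0^{π/4} log (tan θ) dθ`.
Substituting `u = tan θ` gives `∫₀¹ log u / (1 + u²) du`; expanding `1 / (1 + u²) = ∑ (-1)ᵏ u²ᵏ`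
and integrating term by term with `∫₀¹ uⁿ log u du = -1 / (n + 1)²` yields `-G`. Termwise
integration is legitimate because each term has constant sign on `(0, 1)`, so the integrals of
their absolute values are `1 / (2k + 1)²`, a summable sequence.
-/

noncomputable def catalanConstant : ℝ := ∑' k : ℕ, (-1 : ℝ) ^ k / (1 + 2 * (k : ℝ)) ^ 2

theorem integral_pow_mul_log_zero_one (n : ℕ) :
    ∫ t in (0 : ℝ)..1, t ^ n * log t = -1 / (n + 1) ^ 2 := by
  rw [integral_eq_sub_of_hasDerivAt_of_le zero_le_one
    (f := fun t => t ^ n * (t * log t) / (n + 1) - t ^ (n + 1) / (n + 1) ^ 2)]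
  · norm_num [neg_div]
  · exact (((continuous_pow n).mul continuous_mul_log).div_const _ |>.sub
      ((continuous_pow _).div_const _)).continuousOn
  · intro t ht
    have hd : HasDerivAt (fun t => t ^ n * (t * log t) / (n + 1) - t ^ (n + 1) / (n + 1) ^ 2)
        ((n * t ^ (n - 1) * (t * log t) + t ^ n * (log t + 1)) / (n + 1)
          - (n + 1 : ℕ) * t ^ (n + 1 - 1) / (n + 1) ^ 2) t :=
      (((hasDerivAt_pow n t).mul (hasDerivAt_mul_log ht.1.ne')).div_const _).sub
        ((hasDerivAt_pow (n + 1) t).div_const _)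
    refine hd.congr_deriv ?_
    rcases n with _ | n
    · simp
    · simp only [Nat.add_sub_cancel, pow_succ]
      push_cast
      field_simp
      ring
  · exact intervalIntegrable_log'.continuousOn_mul (continuous_pow n).continuousOn

theorem hasSum_neg_one_pow_mul_pow_two_mul {t : ℝ} (ht : |t| < 1) :
    HasSum (fun k : ℕ => (-1) ^ k * t ^ (2 * k)) (1 + t ^ 2)⁻¹ := by
  have h : |-t ^ 2| < 1 := by rw [abs_neg, abs_pow, sq_lt_one_iff_abs_lt_one, abs_abs]; exact ht
  simpa [pow_mul, ← neg_pow, sub_eq_add_neg] using hasSum_geometric_of_abs_lt_one h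

theorem summable_one_div_two_mul_add_one_sq :
    Summable fun k : ℕ => 1 / (2 * k + 1 : ℝ) ^ 2 := by
  have h := (summable_nat_add_iff 1).mpr (Real.summable_one_div_nat_pow.mpr one_lt_two)
  simpa [Function.comp_def] using h.comp_injective (mul_right_injective₀ (two_ne_zero' ℕ))

theorem integral_log_div_one_add_sq_zero_one :
    ∫ t in (0 : ℝ)..1, log t / (1 + t ^ 2) = -catalanConstant := by
  set F : ℕ → ℝ → ℝ := fun k t => (-1) ^ k * (t ^ (2 * k) * log t)
  have hF_int : ∀ k, Integrable (F k) (volume.restrict (Ioo 0 1)) := fun k =>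
    (intervalIntegrable_iff_integrableOn_Ioo_of_le zero_le_one).mp <|
      (intervalIntegrable_log'.continuousOn_mul (continuous_pow (2 * k)).continuousOn).const_mul _
  have hF_norm : ∀ k, ∫ t in Ioo 0 1, ‖F k t‖ = 1 / (2 * k + 1 : ℝ) ^ 2 := by
    intro k
    rw [setIntegral_congr_fun measurableSet_Ioo (g := fun t => -(t ^ (2 * k) * log t)),
      MeasureTheory.integral_neg, ← integral_Ioc_eq_integral_Ioo, ← integral_of_le zero_le_one,
      integral_pow_mul_log_zero_one]
    · push_cast
      ring
    · intro t ht
      simp only [F, norm_mul, norm_pow, norm_neg, norm_one, one_pow, one_mul, Real.norm_eq_abs,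
        abs_of_pos ht.1, abs_of_neg (log_neg ht.1 ht.2)]
      ring
  have hF_sum : ∀ t ∈ Ioo (0 : ℝ) 1, ∑' k, F k t = log t / (1 + t ^ 2) := by
    intro t ht
    have hgeom := hasSum_neg_one_pow_mul_pow_two_mul (abs_lt.mpr ⟨by linarith [ht.1], ht.2⟩)
    simpa [F, mul_assoc, div_eq_inv_mul] using (hgeom.mul_right (log t)).tsum_eq
  rw [integral_of_le zero_le_one, integral_Ioc_eq_integral_Ioo,
    ← setIntegral_congr_fun measurableSet_Ioo hF_sum,
    ← integral_tsum_of_summable_integral_norm hF_int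
      (by simpa only [hF_norm] using summable_one_div_two_mul_add_one_sq),
    catalanConstant, ← tsum_neg]
  refine tsum_congr fun k => ?_
  rw [MeasureTheory.integral_const_mul, ← integral_Ioc_eq_integral_Ioo,
    ← integral_of_le zero_le_one, integral_pow_mul_log_zero_one]
  push_cast
  ring

theorem integral_comp_tan {a b : ℝ} (ha : a ∈ Ioo (-(π / 2)) (π / 2))
    (hb : b ∈ Ioo (-(π / 2)) (π / 2)) (g : ℝ → ℝ) :
    ∫ θ in a..b, g (tan θ) = ∫ u in tan a..tan b, g u / (1 + u ^ 2) := by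
  have hab : uIcc a b ⊆ Ioo (-(π / 2)) (π / 2) := ordConnected_Ioo.uIcc_subset ha hb
  have hcos : ∀ θ ∈ uIcc a b, cos θ ≠ 0 := fun θ hθ => (cos_pos_of_mem_Ioo (hab hθ)).ne'
  rw [← integral_comp_mul_deriv_of_deriv_nonneg (continuousOn_tan_Ioo.mono hab)
    (fun θ hθ => hasDerivAt_tan (hcos θ (Ioo_subset_Icc_self hθ))) (fun θ _ => by positivity)]
  refine integral_congr fun θ hθ => ?_
  simp only [Function.comp, div_eq_mul_inv, mul_assoc, inv_one_add_tan_sq (hcos θ hθ)]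
  field_simp [hcos θ hθ]

theorem integral_log_tan_pi_div_two_sub (a b : ℝ) :
    ∫ θ in π / 2 - b..π / 2 - a, log (tan θ) = -∫ θ in a..b, log (tan θ) := by
  rw [← integral_comp_sub_left, ← intervalIntegral.integral_neg]
  simp only [tan_pi_div_two_sub, log_inv]

theorem integral_log_tan_pi_div_four_pi_div_two :
    ∫ θ in π / 4..π / 2, log (tan θ) = catalanConstant := by
  have h0 : (0 : ℝ) ∈ Ioo (-(π / 2)) (π / 2) := ⟨by linarith [pi_pos], by linarith [pi_pos]⟩
  have h1 : π / 4 ∈ Ioo (-(π / 2)) (π / 2) := ⟨by linarith [pi_pos], by linarith [pi_pos]⟩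
  calc ∫ θ in π / 4..π / 2, log (tan θ)
      = ∫ θ in π / 2 - π / 4..π / 2 - 0, log (tan θ) := by ring_nf
    _ = -∫ u in (0 : ℝ)..1, log u / (1 + u ^ 2) := by
      rw [integral_log_tan_pi_div_two_sub, integral_comp_tan h0 h1, tan_zero, tan_pi_div_four]
    _ = catalanConstant := by rw [integral_log_div_one_add_sq_zero_one, neg_neg]

theorem integral_log_tan_eq_catalan :
    ∫ x in (0:ℝ)..1, Real.log (Real.tan (Real.pi * (x + 1) / 4))
      = 4 * (∑' k : ℕ, (-1 : ℝ) ^ k / (1 + 2 * (k : ℝ)) ^ 2) / Real.pi := by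
  have hπ : π / 4 ≠ 0 := by positivity
  calc ∫ x in (0 : ℝ)..1, log (tan (π * (x + 1) / 4))
      = ∫ x in (0 : ℝ)..1, log (tan (π / 4 * x + π / 4)) := by ring_nf
    _ = (π / 4)⁻¹ * ∫ θ in π / 4..π / 2, log (tan θ) := by
      rw [integral_comp_mul_add (fun θ => log (tan θ)) hπ, smul_eq_mul]
      ring_nf
    _ = 4 * catalanConstant / π := by
      rw [integral_log_tan_pi_div_four_pi_div_two]
      field_simp
end

section
/- ∫₀^1 sinh⁻¹(tan(πx/2)) dx = 4G/π, where G is Catalan's constant. -/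
/-!
Substituting `θ = π x / 2` and then `θ = gd u = arctan (sinh u)` (the Gudermannian function, with
`dθ = du / cosh u` and `arsinh (tan (gd u)) = u`) turns the integral into
`(2 / π) ∫₀^∞ u / cosh u du`. Expanding `1 / cosh u = 2 ∑ (-1)^k e^{-(2k+1) u}` and integrating
term by term against `∫₀^∞ u e^{-c u} du = 1 / c²` gives `∫₀^∞ u / cosh u du = 2 G`.
-/

open Real MeasureTheory Set

lemma hasSum_inv_cosh {u : ℝ} (hu : 0 < u) :
    HasSum (fun k : ℕ => 2 * (-1) ^ k * exp (-((1 + 2 * k) * u))) (cosh u)⁻¹ := by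
  have hr : ‖-exp (-(2 * u))‖ < 1 := by
    rw [norm_neg, norm_of_nonneg (exp_pos _).le, exp_lt_one_iff]
    linarith
  have hterm (k : ℕ) : 2 * (-1) ^ k * exp (-((1 + 2 * k) * u))
      = 2 * exp (-u) * (-exp (-(2 * u))) ^ k := by
    rw [neg_pow (exp _), ← exp_nat_mul, show -((1 + 2 * k) * u) = -u + k * -(2 * u) by ring,
      exp_add]
    ring
  have hlimit : (cosh u)⁻¹ = 2 * exp (-u) * (1 - -exp (-(2 * u)))⁻¹ := by
    rw [cosh_eq, sub_neg_eq_add, show -(2 * u) = -u + -u by ring, exp_add, exp_neg u]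
    field_simp
  simpa only [hterm, hlimit] using (hasSum_geometric_of_norm_lt_one hr).mul_left (2 * exp (-u))

lemma integral_mul_exp_neg_mul_Ioi {c : ℝ} (hc : 0 < c) :
    ∫ u in Ioi (0:ℝ), u * exp (-(c * u)) = 1 / c ^ 2 := by
  have h := integral_rpow_mul_exp_neg_mul_Ioi two_pos hc
  norm_num [Gamma_two] at h
  simpa [div_pow] using h

lemma integrableOn_mul_exp_neg_mul_Ioi {c : ℝ} (hc : 0 < c) :
    IntegrableOn (fun u : ℝ => u * exp (-(c * u))) (Ioi 0) := by
  simpa using integrableOn_rpow_mul_exp_neg_mul_rpow (s := 1) (p := 1) (b := c)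
    (by norm_num) one_pos hc

lemma summable_one_div_odd_sq : Summable (fun k : ℕ => 1 / (1 + 2 * (k : ℝ)) ^ 2) := by
  have h : Summable (fun k : ℕ => 1 / ((k : ℝ) + 1) ^ 2) := by
    exact_mod_cast (summable_nat_add_iff 1).2 (summable_one_div_nat_pow.2 one_lt_two)
  refine h.of_nonneg_of_le (fun k => by positivity) (fun k => ?_)
  apply one_div_le_one_div_of_le (by positivity)
  gcongr ?_ ^ 2
  linarith [(k.cast_nonneg : (0:ℝ) ≤ k)]

lemma integral_div_cosh_Ioi :
    ∫ u in Ioi (0:ℝ), u / cosh u = 2 * ∑' k : ℕ, (-1 : ℝ) ^ k / (1 + 2 * (k : ℝ)) ^ 2 := by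
  set F : ℕ → ℝ → ℝ := fun k u => 2 * (-1) ^ k * (u * exp (-((1 + 2 * k) * u)))
  have hc (k : ℕ) : (0 : ℝ) < 1 + 2 * k := by positivity
  have hF_int (k : ℕ) : IntegrableOn (F k) (Ioi 0) :=
    (integrableOn_mul_exp_neg_mul_Ioi (hc k)).const_mul _
  have hF_norm (k : ℕ) : ∫ u in Ioi (0:ℝ), ‖F k u‖ = 2 * (1 / (1 + 2 * (k : ℝ)) ^ 2) := by
    rw [← integral_mul_exp_neg_mul_Ioi (hc k), ← integral_const_mul]
    refine setIntegral_congr_fun measurableSet_Ioi fun u (hu : 0 < u) => ?_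
    simp [F, abs_of_pos hu]
  have hF_sum : ∀ u ∈ Ioi (0:ℝ), ∑' k, F k u = u / cosh u := fun u hu => by
    simpa [F, div_eq_mul_inv, mul_comm, mul_left_comm, mul_assoc] using
      ((hasSum_inv_cosh hu).mul_left u).tsum_eq
  rw [← setIntegral_congr_fun measurableSet_Ioi hF_sum, ← integral_tsum_of_summable_integral_norm
    hF_int (by simpa only [hF_norm] using summable_one_div_odd_sq.mul_left 2), ← tsum_mul_left]
  refine tsum_congr fun k => ?_
  rw [integral_const_mul, integral_mul_exp_neg_mul_Ioi (hc k)]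
  ring

noncomputable def gudermannian (u : ℝ) : ℝ := arctan (sinh u)

lemma tan_gudermannian (u : ℝ) : tan (gudermannian u) = sinh u := tan_arctan _

lemma gudermannian_strictMono : StrictMono gudermannian :=
  arctan_strictMono.comp sinh_strictMono

lemma hasDerivAt_gudermannian (u : ℝ) : HasDerivAt gudermannian (cosh u)⁻¹ u := by
  have h := (hasDerivAt_arctan (sinh u)).comp u (hasDerivAt_sinh u)
  rwa [← cosh_sq', one_div, ← div_eq_inv_mul, pow_two, div_mul_cancel_right₀ (cosh_pos u).ne']
    at h

lemma image_gudermannian_Ioi : gudermannian '' Ioi 0 = Ioo 0 (π / 2) := by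
  ext θ
  constructor
  · rintro ⟨u, hu, rfl⟩
    exact ⟨arctan_pos.2 (sinh_pos_iff.2 hu), arctan_lt_pi_div_two _⟩
  · rintro ⟨hθ₀, hθ₁⟩
    refine ⟨arsinh (tan θ), arsinh_pos_iff.2 (tan_pos_of_pos_of_lt_pi_div_two hθ₀ hθ₁), ?_⟩
    rw [gudermannian, sinh_arsinh, arctan_tan (by linarith) hθ₁]

lemma setIntegral_Ioo_zero_pi_div_two_eq_integral_Ioi_gudermannian {E : Type*}
    [NormedAddCommGroup E] [NormedSpace ℝ E] (f : ℝ → E) :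
    ∫ θ in Ioo 0 (π / 2), f θ = ∫ u in Ioi 0, (cosh u)⁻¹ • f (gudermannian u) := by
  rw [← image_gudermannian_Ioi, integral_image_eq_integral_abs_deriv_smul measurableSet_Ioi
    (fun u _ => (hasDerivAt_gudermannian u).hasDerivWithinAt)
    gudermannian_strictMono.injective.injOn]
  simp_rw [abs_of_pos (inv_pos.2 (cosh_pos _))]

lemma integral_arsinh_tan_zero_pi_div_two :
    ∫ θ in (0:ℝ)..π / 2, arsinh (tan θ)
      = 2 * ∑' k : ℕ, (-1 : ℝ) ^ k / (1 + 2 * (k : ℝ)) ^ 2 := by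
  rw [intervalIntegral.integral_of_le pi_div_two_pos.le, integral_Ioc_eq_integral_Ioo,
    setIntegral_Ioo_zero_pi_div_two_eq_integral_Ioi_gudermannian]
  simp_rw [tan_gudermannian, arsinh_sinh, smul_eq_mul, inv_mul_eq_div]
  exact integral_div_cosh_Ioi

theorem integral_arsinh_tan_eq_catalan :
    ∫ x in (0:ℝ)..1, Real.arsinh (Real.tan (Real.pi * x / 2))
      = 4 * (∑' k : ℕ, (-1 : ℝ) ^ k / (1 + 2 * (k : ℝ)) ^ 2) / Real.pi := by
  simp_rw [mul_div_right_comm π _ 2]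
  rw [intervalIntegral.integral_comp_mul_left (fun θ => arsinh (tan θ)) pi_div_two_pos.ne',
    mul_zero, mul_one, integral_arsinh_tan_zero_pi_div_two, smul_eq_mul]
  field_simp
  ring
end

section
/- For every z > 0, ∫₀^z sech(πx/2) · sech(π(z−x)/2) dx = (4/π) csch(πz/2) · log(cosh(πz/2)). -/
/-!
Since `tanh a + tanh b = sinh (a + b) / (cosh a * cosh b)`, the integrand
`sech (k x) sech (k (z - x))` equals `(tanh (k x) + tanh (k (z - x))) / sinh (k z)`, whose
antiderivative is `(log cosh (k x) - log cosh (k (z - x))) / (k sinh (k z))`.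
-/

open Real intervalIntegral

namespace Real

lemma two_div_exp_add_exp_neg (a : ℝ) : 2 / (exp a + exp (-a)) = (cosh a)⁻¹ := by
  rw [cosh_eq, inv_div]

lemma two_div_exp_sub_exp_neg (a : ℝ) : 2 / (exp a - exp (-a)) = (sinh a)⁻¹ := by
  rw [sinh_eq, inv_div]

lemma tanh_add_tanh (a b : ℝ) : tanh a + tanh b = sinh (a + b) / (cosh a * cosh b) := by
  have := (cosh_pos a).ne'
  have := (cosh_pos b).ne'
  rw [tanh_eq_sinh_div_cosh, tanh_eq_sinh_div_cosh, sinh_add]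
  field_simp

lemma hasDerivAt_log_cosh (x : ℝ) : HasDerivAt (fun x => log (cosh x)) (tanh x) x := by
  simpa [tanh_eq_sinh_div_cosh] using (hasDerivAt_cosh x).log (cosh_pos x).ne'

lemma integral_inv_cosh_mul_inv_cosh_sub (k z : ℝ) (hk : k ≠ 0) :
    ∫ x in (0 : ℝ)..z, (cosh (k * x))⁻¹ * (cosh (k * (z - x)))⁻¹
      = 2 * log (cosh (k * z)) / (k * sinh (k * z)) := by
  rcases eq_or_ne z 0 with rfl | hz
  · simp
  have hs : sinh (k * z) ≠ 0 := sinh_ne_zero.mpr (mul_ne_zero hk hz)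
  set F : ℝ → ℝ := fun x => (log (cosh (k * x)) - log (cosh (k * (z - x)))) / (k * sinh (k * z))
  have hF : ∀ x ∈ Set.uIcc 0 z,
      HasDerivAt F ((cosh (k * x))⁻¹ * (cosh (k * (z - x)))⁻¹) x := by
    intro x _
    have h₁ := (hasDerivAt_log_cosh (k * x)).comp x ((hasDerivAt_id x).const_mul k)
    have h₂ := (hasDerivAt_log_cosh (k * (z - x))).comp x
      (((hasDerivAt_id x).const_sub z).const_mul k)
    refine ((h₁.sub h₂).div_const _).congr_deriv ?_
    have hsum : tanh (k * x) + tanh (k * (z - x))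
        = sinh (k * z) / (cosh (k * x) * cosh (k * (z - x))) := by
      rw [tanh_add_tanh, ← mul_add, add_sub_cancel]
    calc _ = k * (tanh (k * x) + tanh (k * (z - x))) / (k * sinh (k * z)) := by ring
      _ = _ := by rw [hsum]; field_simp
  have hint : IntervalIntegrable (fun x => (cosh (k * x))⁻¹ * (cosh (k * (z - x)))⁻¹)
      MeasureTheory.volume 0 z :=
    (((by fun_prop : Continuous fun x => cosh (k * x)).inv₀ fun _ => (cosh_pos _).ne').mul
      ((by fun_prop : Continuous fun x => cosh (k * (z - x))).inv₀ fun _ => (cosh_pos _).ne')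
      ).intervalIntegrable _ _
  rw [integral_eq_sub_of_hasDerivAt hF hint]
  simp only [F, mul_zero, sub_zero, sub_self, cosh_zero, log_one]
  ring

end Real

theorem sech_convolution_general (z : ℝ) :
    ∫ x in (0:ℝ)..z,
        (2 / (Real.exp (Real.pi * x / 2) + Real.exp (-(Real.pi * x / 2)))) *
        (2 / (Real.exp (Real.pi * (z - x) / 2) + Real.exp (-(Real.pi * (z - x) / 2))))
      = 4 / Real.pi * (2 / (Real.exp (Real.pi * z / 2) - Real.exp (-(Real.pi * z / 2)))) *
        Real.log ((Real.exp (Real.pi * z / 2) + Real.exp (-(Real.pi * z / 2))) / 2) := by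
  simp only [two_div_exp_add_exp_neg, two_div_exp_sub_exp_neg, ← cosh_eq, mul_div_right_comm π]
  rw [integral_inv_cosh_mul_inv_cosh_sub _ _ (by positivity)]
  ring

theorem sech_convolution (z : ℝ) (hz : z > 0) :
    ∫ x in (0:ℝ)..z,
        (2 / (Real.exp (Real.pi * x / 2) + Real.exp (-(Real.pi * x / 2)))) *
        (2 / (Real.exp (Real.pi * (z - x) / 2) + Real.exp (-(Real.pi * (z - x) / 2))))
      = 4 / Real.pi * (2 / (Real.exp (Real.pi * z / 2) - Real.exp (-(Real.pi * z / 2)))) *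
        Real.log ((Real.exp (Real.pi * z / 2) + Real.exp (-(Real.pi * z / 2))) / 2) :=
  sech_convolution_general z
end

section
/- ∫₀^∞ y^(−3) · sech(π/(2y)) dy = 8G/π², where G is Catalan's constant. -/
open MeasureTheory Set Real

lemma aux_eq {c : ℝ} : ∀ x ∈ Ioi (0:ℝ),
    (|(-1:ℝ)| * x ^ ((-1:ℝ) - 1)) • ((x ^ (-1:ℝ)) * Real.exp (-(c * x ^ (-1:ℝ))))
      = x ^ (-3 : ℤ) * Real.exp (-(c / x)) := by
  intro x hx
  have hx0 : x ≠ 0 := (ne_of_gt hx)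
  have h1 : x ^ ((-1:ℝ)) = x⁻¹ := by
    rw [show ((-1:ℝ)) = ((-1 : ℤ) : ℝ) by norm_num, Real.rpow_intCast, zpow_neg_one]
  have h2 : x ^ ((-1:ℝ) - 1) = (x^2)⁻¹ := by
    rw [show ((-1:ℝ) - 1) = ((-2 : ℤ) : ℝ) by norm_num, Real.rpow_intCast]
    rw [zpow_neg]; norm_cast
  rw [h1, h2, smul_eq_mul]
  rw [show x ^ (-3 : ℤ) = (x^3)⁻¹ by rw [zpow_neg]; norm_cast, div_eq_mul_inv]
  field_simp
  ring

lemma term_integrable {c : ℝ} (hc : 0 < c) :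
    IntegrableOn (fun y : ℝ => y ^ (-3 : ℤ) * Real.exp (-(c / y))) (Ioi 0) := by
  have base : IntegrableOn (fun t : ℝ => t * Real.exp (-t)) (Ioi 0) := by
    have hfe : (fun x : ℝ => Real.exp (-x) * x ^ ((2:ℝ) - 1)) = fun t : ℝ => t * Real.exp (-t) := by
      ext x
      rw [show (2:ℝ) - 1 = 1 by norm_num, Real.rpow_one, mul_comm]
    have := Real.GammaIntegral_convergent (s := 2) two_pos
    rwa [hfe] at this
  have scaled : IntegrableOn (fun t : ℝ => t * Real.exp (-(c*t))) (Ioi 0) := by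
    have h := (integrableOn_Ioi_comp_mul_left_iff (fun t : ℝ => t * Real.exp (-t)) 0 hc).mpr
      (by rwa [mul_zero])
    have h2 : IntegrableOn (fun x : ℝ => c⁻¹ * (c * x * Real.exp (-(c*x)))) (Ioi 0) :=
      h.const_mul c⁻¹
    refine h2.congr_fun (fun x hx => ?_) measurableSet_Ioi
    field_simp
  have h := (integrableOn_Ioi_comp_rpow_iff
      (fun t : ℝ => t * Real.exp (-(c*t))) (p := -1) (by norm_num)).mpr scaled
  exact h.congr_fun aux_eq measurableSet_Ioi

lemma term_integral {c : ℝ} (hc : 0 < c) :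
    ∫ y in Ioi (0:ℝ), y ^ (-3 : ℤ) * Real.exp (-(c / y)) = 1 / c ^ 2 := by
  have h2 := integral_comp_rpow_Ioi (fun t : ℝ => t * Real.exp (-(c*t))) (p := -1) (by norm_num)
  rw [setIntegral_congr_fun measurableSet_Ioi aux_eq] at h2
  rw [h2]
  have h1 := Real.integral_rpow_mul_exp_neg_mul_Ioi (a := 2) (r := c) two_pos hc
  simp only [show (2:ℝ) - 1 = 1 by norm_num, Real.rpow_one] at h1
  rw [h1, Real.Gamma_two, mul_one,
    show (2:ℝ) = ((2:ℕ):ℝ) by norm_num, Real.rpow_natCast]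
  rw [one_div, one_div, inv_pow]

lemma tsum_sech {y : ℝ} (hy : 0 < y) :
    ∑' k : ℕ, 2 * (-1:ℝ)^k * (y ^ (-3 : ℤ) * Real.exp (-((2*(k:ℝ)+1) * (Real.pi/2) / y)))
      = y ^ (-3 : ℤ) * (2 / (Real.exp (Real.pi / (2*y)) + Real.exp (-(Real.pi/(2*y))))) := by
  have hπ := Real.pi_pos
  set a := Real.pi / (2*y) with ha
  have hapos : 0 < a := by positivity
  have hterm : ∀ k : ℕ, 2 * (-1:ℝ)^k * (y ^ (-3 : ℤ) * Real.exp (-((2*(k:ℝ)+1) * (Real.pi/2) / y)))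
      = (2 * y ^ (-3:ℤ) * Real.exp (-a)) * (-Real.exp (-(2*a)))^k := by
    intro k
    have hex : (2*(k:ℝ)+1) * (Real.pi/2) / y = (k:ℝ) * (2*a) + a := by
      rw [ha]; field_simp
    rw [hex, neg_add, Real.exp_add]
    have h3 : Real.exp (-((k:ℝ) * (2*a))) = (Real.exp (-(2*a)))^k := by
      rw [← Real.exp_nat_mul]; ring_nf
    rw [h3, neg_pow]
    ring
  rw [tsum_congr hterm, tsum_mul_left, tsum_geometric_of_norm_lt_one (ξ := -Real.exp (-(2*a)))
    (by rw [norm_neg, Real.norm_eq_abs, abs_of_pos (Real.exp_pos _)]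
        exact Real.exp_lt_one_iff.mpr (by linarith))]
  have hE2 : Real.exp (-(2*a)) = Real.exp (-a) ^ 2 := by
    rw [← Real.exp_nat_mul]; ring_nf
  have hEa : Real.exp a = (Real.exp (-a))⁻¹ := by
    rw [← Real.exp_neg, neg_neg]
  rw [hE2, hEa, sub_neg_eq_add]
  have hE : Real.exp (-a) ≠ 0 := (Real.exp_pos _).ne'
  have hE1 : (1:ℝ) + Real.exp (-a) ^ 2 ≠ 0 := by positivity
  have h4 : (Real.exp (-a))⁻¹ + Real.exp (-a) = (1 + Real.exp (-a) ^ 2) / Real.exp (-a) := by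
    field_simp
  rw [h4, div_div_eq_mul_div, div_eq_mul_inv]
  ring

theorem inverse_change_of_variable :
    ∫ y in Set.Ioi (0:ℝ),
        y ^ (-3 : ℤ) *
          (2 / (Real.exp (Real.pi / (2 * y)) + Real.exp (-(Real.pi / (2 * y)))))
      = 8 * (∑' k : ℕ, (-1 : ℝ) ^ k / (1 + 2 * (k : ℝ)) ^ 2) / Real.pi ^ 2 := by
  have hπ := Real.pi_pos
  set c : ℕ → ℝ := fun k => (2*(k:ℝ)+1) * (Real.pi/2) with hc
  have hcpos : ∀ k, 0 < c k := fun k => by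
    have : (0:ℝ) ≤ (k:ℝ) := Nat.cast_nonneg k
    rw [hc]; positivity
  set f : ℕ → ℝ → ℝ := fun k y => 2 * (-1:ℝ)^k * (y ^ (-3:ℤ) * Real.exp (-(c k / y))) with hf
  have hint : ∀ k, IntegrableOn (f k) (Ioi 0) := fun k =>
    (term_integrable (hcpos k)).const_mul _
  have hIntEq : ∀ k, (∫ y in Ioi (0:ℝ), f k y) = 2 * (-1:ℝ)^k * (1/(c k)^2) := by
    intro k
    rw [hf]
    simp only
    rw [MeasureTheory.integral_const_mul, term_integral (hcpos k)]
  have hnorm : ∀ k, (∫ y in Ioi (0:ℝ), ‖f k y‖) = 2 * (1/(c k)^2) := by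
    intro k
    rw [setIntegral_congr_fun measurableSet_Ioi
      (g := fun y => 2 * (y ^ (-3:ℤ) * Real.exp (-(c k / y)))) ?_,
      MeasureTheory.integral_const_mul, term_integral (hcpos k)]
    intro y hy
    have h3 : (0:ℝ) < y ^ (-3 : ℤ) := zpow_pos hy _
    have : (0:ℝ) ≤ y ^ (-3:ℤ) * Real.exp (-(c k / y)) := by positivity
    rw [hf]
    simp only [Real.norm_eq_abs, abs_mul, abs_of_nonneg this, abs_pow, abs_neg, abs_one,
      one_pow, mul_one, abs_two]
  have hs1 : Summable fun k : ℕ => 1/((2*(k:ℝ)+1))^2 := by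
    have h0 : Summable fun k : ℕ => 1/((k:ℝ)+1)^2 := by
      have hg : Summable fun n : ℕ => 1/(n:ℝ)^2 := summable_one_div_nat_pow.mpr one_lt_two
      have := (summable_nat_add_iff 1).mpr hg
      refine this.congr fun n => by push_cast; ring
    refine Summable.of_nonneg_of_le (fun k => by positivity) (fun k => ?_) h0
    have hk : (0:ℝ) ≤ (k:ℝ) := Nat.cast_nonneg k
    apply one_div_le_one_div_of_le (by positivity)
    apply pow_le_pow_left₀ (by positivity)
    linarith
  have hsum : Summable fun k => ∫ y in Ioi (0:ℝ), ‖f k y‖ := by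
    refine ((hs1.mul_left (8/Real.pi^2)).congr fun k => ?_)
    rw [hnorm k, hc]
    have := hcpos k
    field_simp
    ring
  have key := MeasureTheory.integral_tsum_of_summable_integral_norm hint hsum
  have hpt : ∀ y ∈ Ioi (0:ℝ),
      y ^ (-3 : ℤ) * (2 / (Real.exp (Real.pi / (2 * y)) + Real.exp (-(Real.pi / (2 * y)))))
        = ∑' k : ℕ, f k y := by
    intro y hy
    exact (tsum_sech hy).symm
  rw [setIntegral_congr_fun measurableSet_Ioi hpt, ← key, tsum_congr hIntEq]
  have : ∀ k : ℕ, 2 * (-1:ℝ)^k * (1/(c k)^2)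
      = (8/Real.pi^2) * ((-1:ℝ)^k / (1 + 2*(k:ℝ))^2) := by
    intro k
    have := hcpos k
    rw [hc]
    field_simp
    ring
  rw [tsum_congr this, tsum_mul_left]
  ring
end

section
/- 7ζ(3)/(4π) < G < 7ζ(3)/(2π), where G is Catalan's constant and ζ(3) is Apéry's constant. -/
/-!
Both bounds follow from crude numerical enclosures. The alternating series for Catalan's
constant `G` has decreasing terms, so `1 - 1/9 ≤ G ≤ 1`. For `ζ(3)`, the first term gives
`1 ≤ ζ(3)`, and `1/n³ ≤ 1/(2n²)` for `n ≥ 2` gives `ζ(3) ≤ (1 + ζ(2))/2 = 1/2 + π²/12`.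
With `3 < π < 3.15` these enclosures already separate the three quantities.
-/

open Filter Finset Real Topology

lemma Antitone.alternating_series_mem_Icc {f : ℕ → ℝ} {l : ℝ} (hfa : Antitone f)
    (hfl : Tendsto (fun n ↦ ∑ i ∈ range n, (-1) ^ i * f i) atTop (𝓝 l)) :
    l ∈ Set.Icc (f 0 - f 1) (f 0) := by
  have hlower := hfa.alternating_series_le_tendsto hfl 1
  have hupper := hfa.tendsto_le_alternating_series hfl 0
  simp only [sum_range_succ, sum_range_zero] at hlower hupper
  constructor <;> norm_num at hlower hupper <;> linarith

lemma summable_one_div_succ_pow {p : ℕ} (hp : 1 < p) :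
    Summable (fun k : ℕ ↦ 1 / ((k : ℝ) + 1) ^ p) := by
  have h := (summable_nat_add_iff 1).2 (Real.summable_one_div_nat_pow.2 hp)
  simpa only [Nat.cast_add, Nat.cast_one] using h

lemma one_le_tsum_one_div_succ_pow {p : ℕ} (hp : 1 < p) :
    1 ≤ ∑' k : ℕ, 1 / ((k : ℝ) + 1) ^ p := by
  have h := (summable_one_div_succ_pow hp).le_tsum 0 (fun k _ ↦ by positivity)
  simpa using h

lemma hasSum_one_div_succ_sq : HasSum (fun k : ℕ ↦ 1 / ((k : ℝ) + 1) ^ 2) (π ^ 2 / 6) := by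
  have h := hasSum_zeta_two
  rw [← hasSum_nat_add_iff' 1] at h
  simpa using h

lemma tsum_one_div_succ_cube_le :
    ∑' k : ℕ, 1 / ((k : ℝ) + 1) ^ 3 ≤ (1 + π ^ 2 / 6) / 2 := by
  have hmajorant : HasSum (fun k : ℕ ↦ ((if k = 0 then 1 else 0) + 1 / ((k : ℝ) + 1) ^ 2) / 2)
      ((1 + π ^ 2 / 6) / 2) :=
    ((hasSum_ite_eq 0 1).add hasSum_one_div_succ_sq).div_const 2
  refine hasSum_le (fun k ↦ ?_) (summable_one_div_succ_pow (by norm_num)).hasSum hmajorant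
  rcases Nat.eq_zero_or_pos k with rfl | hk
  · norm_num
  · have hk1 : (1 : ℝ) ≤ k := by exact_mod_cast hk
    rw [if_neg hk.ne', zero_add, div_div, div_le_div_iff₀ (by positivity) (by positivity)]
    nlinarith

lemma summable_catalan : Summable (fun k : ℕ ↦ (-1 : ℝ) ^ k / (1 + 2 * (k : ℝ)) ^ 2) := by
  refine (summable_one_div_succ_pow one_lt_two).of_norm_bounded (fun k ↦ ?_)
  rw [norm_div, norm_pow, norm_neg, norm_one, one_pow, norm_pow, Real.norm_eq_abs,
    abs_of_pos (by positivity)]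
  gcongr 1 / ?_ ^ 2
  linarith [(k.cast_nonneg : (0 : ℝ) ≤ k)]

lemma catalan_mem_Icc :
    ∑' k : ℕ, (-1 : ℝ) ^ k / (1 + 2 * (k : ℝ)) ^ 2 ∈ Set.Icc (8 / 9) 1 := by
  have hfa : Antitone (fun k : ℕ ↦ ((1 + 2 * (k : ℝ)) ^ 2)⁻¹) := fun m n hmn ↦ by
    have : (m : ℝ) ≤ n := by exact_mod_cast hmn
    dsimp only
    gcongr
  have hfl := summable_catalan.hasSum.tendsto_sum_nat
  simp only [div_eq_mul_inv] at hfl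
  have h := hfa.alternating_series_mem_Icc hfl
  norm_num at h
  exact h

theorem catalan_bounds :
    7 * (∑' k : ℕ, 1 / ((k : ℝ) + 1) ^ 3) / (4 * Real.pi)
        < (∑' k : ℕ, (-1 : ℝ) ^ k / (1 + 2 * (k : ℝ)) ^ 2) ∧
      (∑' k : ℕ, (-1 : ℝ) ^ k / (1 + 2 * (k : ℝ)) ^ 2)
        < 7 * (∑' k : ℕ, 1 / ((k : ℝ) + 1) ^ 3) / (2 * Real.pi) := by
  obtain ⟨hG_lower, hG_upper⟩ := catalan_mem_Icc
  have hζ_lower := one_le_tsum_one_div_succ_pow (p := 3) (by norm_num)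
  have hζ_upper := tsum_one_div_succ_cube_le
  have hπ_lower := pi_gt_three
  have hπ_upper := pi_lt_d2
  constructor
  · rw [div_lt_iff₀ (by positivity)]
    nlinarith
  · rw [lt_div_iff₀ (by positivity)]
    nlinarith
end
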